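/- Let B be a commutative ring, n = (x₁, …, x_h) an ideal with h ≥ 2, and integers t ≥ 2, s ≥ t+1. Let J be the ideal generated by {x₁x_j : 3 ≤ j ≤ h}, {x_i x_j : 2 ≤ i < j ≤ h}, {x_j² − u_j x₁^s : 3 ≤ j ≤ h}, x₂² − a x₁ x₂ − w x₁^{s−t+1}, and x₁^t x₂, where a, u₃, …, u_h ∈ B and w is a unit in B. Then n^{s+1} ⊆ J. -/

import Mathlib

/-!
Work modulo `J` and put `L = (x₁)`, `Q = (x₁, x₂)`, so that `L^r Q = (x₁^{r+1}, x₁^r x₂)`.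
The relations give `n Q ⊆ L Q` (the one non-trivial product being `x₂² = a x₁x₂ + w x₁^{s-t+1}`)
and `n² ⊆ L Q` (using also `x_j² = u_j x₁^s`), hence `n^{r+1} ⊆ L^r Q` for all `r ≥ 1`.
For `r = s` both generators vanish: `x₁^s x₂` is a multiple of `x₁^t x₂`, and
`w x₁^{s+1} = x₁^t (x₂² − a x₁x₂) = 0` with `w` a unit.
-/

lemma pow_add_eq_zero_of_sq_eq {R : Type*} [CommRing R] {p q a w : R} {t e : ℕ} (hw : IsUnit w)
    (hq : q ^ 2 - a * p * q - w * p ^ e = 0) (hpq : p ^ t * q = 0) : p ^ (t + e) = 0 := by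
  rw [← hw.mul_right_eq_zero]
  linear_combination (q - a * p) * hpq - p ^ t * hq

namespace Ideal

variable {R : Type*} [CommSemiring R]

lemma span_mul_span_le {S T : Set R} {K : Ideal R} (h : ∀ a ∈ S, ∀ b ∈ T, a * b ∈ K) :
    span S * span T ≤ K := by
  rw [span_mul_span', span_le]
  exact Set.mul_subset_iff.mpr h

lemma pow_add_two_le_pow_mul {N L Q : Ideal R} (hN : N * N ≤ L * Q) (hQ : N * Q ≤ L * Q)
    (m : ℕ) : N ^ (m + 2) ≤ L ^ (m + 1) * Q := by
  induction m with
  | zero => simpa [pow_two] using hN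
  | succ m ih =>
    calc N ^ (m + 1 + 2) = N * N ^ (m + 2) := pow_succ' _ _
      _ ≤ N * (L ^ (m + 1) * Q) := mul_mono_right ih
      _ = L ^ (m + 1) * (N * Q) := mul_left_comm _ _ _
      _ ≤ L ^ (m + 1) * (L * Q) := mul_mono_right hQ
      _ = L ^ (m + 1 + 1) * Q := by rw [← mul_assoc, ← pow_succ]

lemma pow_mem_span_singleton_mul_span_pair (p q : R) {m : ℕ} (hm : 2 ≤ m) :
    p ^ m ∈ span {p} * span {p, q} := by
  obtain ⟨k, rfl⟩ := Nat.exists_eq_add_of_le' hm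
  rw [pow_add, pow_two]
  exact mul_mem_left _ _ (mul_mem_mul (mem_span_singleton_self p) (subset_span (by simp)))

lemma span_singleton_pow_mul_span_pair_eq_bot {p q : R} {s : ℕ} (hp : p ^ (s + 1) = 0)
    (hq : p ^ s * q = 0) : span {p} ^ s * span {p, q} = ⊥ := by
  rw [span_singleton_pow, eq_bot_iff]
  refine span_mul_span_le ?_
  rintro _ rfl b (rfl | rfl)
  · rw [← pow_succ, hp]; exact zero_mem _
  · rw [hq]; exact zero_mem _

end Ideal

open Ideal

section Relations

variable {R : Type*} [CommRing R] {h : ℕ} {y : ℕ → R}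

lemma span_image_mul_span_pair_le
    (h1j : ∀ j, 3 ≤ j → j ≤ h → y 1 * y j = 0) (h2j : ∀ j, 3 ≤ j → j ≤ h → y 2 * y j = 0)
    (h22 : y 2 ^ 2 ∈ span {y 1} * span {y 1, y 2}) :
    span (y '' Set.Icc 1 h) * span {y 1, y 2} ≤ span {y 1} * span {y 1, y 2} := by
  have hmem : ∀ b ∈ ({y 1, y 2} : Set R), y 1 * b ∈ span {y 1} * span {y 1, y 2} :=
    fun b hb => mul_mem_mul (mem_span_singleton_self _) (subset_span hb)
  refine span_mul_span_le ?_
  rintro _ ⟨i, ⟨hi1, hih⟩, rfl⟩ b hb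
  obtain rfl | rfl | hi3 : i = 1 ∨ i = 2 ∨ 3 ≤ i := by omega
  · exact hmem b hb
  · rcases hb with rfl | rfl
    · rw [mul_comm (y 2)]; exact hmem _ (by simp)
    · rwa [← pow_two]
  · rcases hb with rfl | rfl <;> rw [mul_comm (y i)]
    · rw [h1j i hi3 hih]; exact zero_mem _
    · rw [h2j i hi3 hih]; exact zero_mem _

lemma span_image_mul_self_le {K : Ideal R}
    (hQ : span (y '' Set.Icc 1 h) * span {y 1, y 2} ≤ K)
    (hij : ∀ i j, 3 ≤ i → i < j → j ≤ h → y i * y j = 0)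
    (hjj : ∀ j, 3 ≤ j → j ≤ h → y j ^ 2 ∈ K) :
    span (y '' Set.Icc 1 h) * span (y '' Set.Icc 1 h) ≤ K := by
  have hsmall : ∀ i j, i ∈ Set.Icc 1 h → j ∈ Set.Icc 1 h → j ≤ 2 → y i * y j ∈ K := by
    rintro i j hi ⟨hj1, -⟩ hj2
    refine hQ (mul_mem_mul (subset_span ⟨i, hi, rfl⟩) (subset_span ?_))
    obtain rfl | rfl : j = 1 ∨ j = 2 := by omega
    all_goals simp
  refine span_mul_span_le ?_
  rintro _ ⟨i, hi, rfl⟩ _ ⟨j, hj, rfl⟩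
  by_cases hj2 : j ≤ 2
  · exact hsmall i j hi hj hj2
  by_cases hi2 : i ≤ 2
  · rw [mul_comm (y i)]; exact hsmall j i hj hi hi2
  rcases lt_trichotomy i j with hlt | rfl | hgt
  · rw [hij i j (by omega) hlt hj.2]; exact zero_mem _
  · rw [← pow_two]; exact hjj i (by omega) hi.2
  · rw [mul_comm (y i), hij j i (by omega) hgt hi.2]; exact zero_mem _

theorem span_image_pow_succ_eq_bot {t s : ℕ} (hs : 2 ≤ s) (hts : t + 1 ≤ s) {u : ℕ → R}
    {a w : R} (hw : IsUnit w)
    (h1j : ∀ j, 3 ≤ j → j ≤ h → y 1 * y j = 0)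
    (hij : ∀ i j, 2 ≤ i → i < j → j ≤ h → y i * y j = 0)
    (hjj : ∀ j, 3 ≤ j → j ≤ h → y j ^ 2 - u j * y 1 ^ s = 0)
    (h22 : y 2 ^ 2 - a * y 1 * y 2 - w * y 1 ^ (s - t + 1) = 0)
    (h12 : y 1 ^ t * y 2 = 0) :
    span (y '' Set.Icc 1 h) ^ (s + 1) = ⊥ := by
  have hy2 : y 2 ^ 2 ∈ span {y 1} * span {y 1, y 2} := by
    rw [show y 2 ^ 2 = a * (y 1 * y 2) + w * y 1 ^ (s - t + 1) by linear_combination h22]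
    exact add_mem (mul_mem_left _ _ (mul_mem_mul (mem_span_singleton_self _) (subset_span
      (by simp)))) (mul_mem_left _ _ (pow_mem_span_singleton_mul_span_pair _ _ (by omega)))
  have hQ := span_image_mul_span_pair_le h1j (fun j => hij 2 j le_rfl) hy2
  have hN := span_image_mul_self_le hQ (fun i j hi => hij i j (by omega)) fun j h3 hj => by
    rw [sub_eq_zero.mp (hjj j h3 hj)]
    exact mul_mem_left _ _ (pow_mem_span_singleton_mul_span_pair _ _ hs)
  have hbot : span {y 1} ^ s * span {y 1, y 2} = ⊥ := by
    have hy1 := pow_add_eq_zero_of_sq_eq hw h22 h12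
    rw [show t + (s - t + 1) = s + 1 by omega] at hy1
    exact span_singleton_pow_mul_span_pair_eq_bot hy1 (pow_mul_eq_zero_of_le (by omega) h12)
  obtain ⟨m, rfl⟩ := Nat.exists_eq_add_of_le' hs
  rw [eq_bot_iff, ← hbot]
  exact pow_add_two_le_pow_mul hN hQ (m + 1)

end Relations

theorem power_in_ideal
    (B : Type*) [CommRing B] (h t s : ℕ) (ht : 2 ≤ t) (hs : t + 1 ≤ s)
    (x u : ℕ → B) (a w : B) (hw : IsUnit w)
    (n J : Ideal B)
    (hn : n = Ideal.span ((fun i => x i) '' Set.Icc 1 h))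
    (hJ : J = Ideal.span
      ({p | ∃ j, 3 ≤ j ∧ j ≤ h ∧ p = x 1 * x j} ∪
       {p | ∃ i j, 2 ≤ i ∧ i < j ∧ j ≤ h ∧ p = x i * x j} ∪
       {p | ∃ j, 3 ≤ j ∧ j ≤ h ∧ p = x j ^ 2 - u j * x 1 ^ s} ∪
       {x 2 ^ 2 - a * x 1 * x 2 - w * x 1 ^ (s - t + 1)} ∪
       {x 1 ^ t * x 2})) :
    n ^ (s + 1) ≤ J := by
  rw [← mk_ker (I := J), ← map_eq_bot_iff_le_ker, Ideal.map_pow, hn, map_span, Set.image_image]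
  refine span_image_pow_succ_eq_bot (u := fun j => Ideal.Quotient.mk J (u j))
    (a := Ideal.Quotient.mk J a) (by omega) hs (hw.map (Ideal.Quotient.mk J))
    (fun j h3 hj => ?_) (fun i j h2 hij hj => ?_) (fun j h3 hj => ?_) ?_ ?_ <;>
  simp only [← map_mul, ← map_pow, ← map_sub, Ideal.Quotient.eq_zero_iff_mem, hJ] <;>
  apply subset_span
  · exact Or.inl (Or.inl (Or.inl (Or.inl ⟨j, h3, hj, rfl⟩)))
  · exact Or.inl (Or.inl (Or.inl (Or.inr ⟨i, j, h2, hij, hj, rfl⟩)))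
  · exact Or.inl (Or.inl (Or.inr ⟨j, h3, hj, rfl⟩))
  · exact Or.inl (Or.inr rfl)
  · exact Or.inr rfl
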